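/- Fix the block setup and the function $g_S(A,\Omega)$ defined in the context, with $A \in \mathbb{C}^{n_B \times n_M}$ arbitrary and $\Omega \in \mathbb{C}^{n_B \times n_B}$ Hermitian positive definite. Let $S \subseteq \{1,\dots,N_B\}$ be nonempty and let $i \notin S$. Then $g_{S \cup \{i\}}(A,\Omega) - g_S(A,\Omega) = \log_2 \det\big((AA^{\dagger})_{i,i} + \Omega_{i,i}\big) - \log_2 \det\big(\Omega_{i,i} - \Omega_{i,S}\,\Omega_{S,S}^{-1}\,\Omega_{S,i}\big)$, where $\Omega_{i,S} := \Omega_{\{i\},S}$ and $\Omega_{S,i} := \Omega_{S,\{i\}}$; in particular the Schur complement $\Omega_{i,i} - \Omega_{i,S}\Omega_{S,S}^{-1}\Omega_{S,i}$ is positive definite so the right-hand side is well defined. -/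

import Mathlib

open Matrix
open scoped ComplexOrder

/-- Base-2 logarithm of the (real part of the) determinant of a complex matrix. -/
noncomputable def logdet2 {ι : Type*} [Fintype ι] [DecidableEq ι]
    (M : Matrix ι ι ℂ) : ℝ :=
  Real.logb 2 M.det.re

/-- Block submatrix `M_{S,T}`: keep the rows whose block index lies in `S` and the
columns whose block index lies in `T`. -/
def blockSub {NB : ℕ} {nb : Fin NB → ℕ}
    (M : Matrix (Σ i, Fin (nb i)) (Σ i, Fin (nb i)) ℂ) (S T : Finset (Fin NB)) :
    Matrix {p : Σ i, Fin (nb i) // p.1 ∈ S} {p : Σ i, Fin (nb i) // p.1 ∈ T} ℂ :=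
  M.submatrix Subtype.val Subtype.val

/-- The backhaul constraint function
`g_S(A,Ω) = ∑_{i ∈ S} log₂ det((AA†)_{i,i} + Ω_{i,i}) - log₂ det(Ω_{S,S})`. -/
noncomputable def gFun {NB nM : ℕ} {nb : Fin NB → ℕ}
    (A : Matrix (Σ i, Fin (nb i)) (Fin nM) ℂ)
    (Ω : Matrix (Σ i, Fin (nb i)) (Σ i, Fin (nb i)) ℂ) (S : Finset (Fin NB)) : ℝ :=
  (∑ i ∈ S, logdet2 (blockSub (A * Aᴴ) {i} {i} + blockSub Ω {i} {i})) -
    logdet2 (blockSub Ω S S)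

/-!
Reindexing `Ω_{S ∪ {i}, S ∪ {i}}` as the block matrix `[[Ω_ii, Ω_iS], [Ω_Si, Ω_SS]]`, the Schur
determinant formula gives `det Ω_{S ∪ {i}} = det Ω_SS * det (Ω_ii - Ω_iS Ω_SS⁻¹ Ω_Si)`. Both
factors are determinants of positive definite matrices, hence positive reals, so `log₂ det`
splits additively; the sum in `g` merely gains its `i`-th term.
-/

namespace Matrix

variable {m n 𝕜 : Type*} [Fintype m] [Fintype n] [DecidableEq m] [DecidableEq n] [RCLike 𝕜]

/-- The Schur complement is positive semidefinite by the Schur complement criterion, and it is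
nonsingular because `det (fromBlocks A B Bᴴ D) = det D * det (A - B * D⁻¹ * Bᴴ)`. -/
theorem PosDef.schur_complement₂₂ {A : Matrix m m 𝕜} {B : Matrix m n 𝕜} {D : Matrix n n 𝕜}
    (h : (fromBlocks A B Bᴴ D).PosDef) : (A - B * D⁻¹ * Bᴴ).PosDef := by
  have hD : D.PosDef :=
    h.submatrix (e := (Sum.inr : n → m ⊕ n)) Sum.inr_injective
  have := hD.isUnit.invertible
  have hdet := det_fromBlocks₂₂ A B Bᴴ D
  rw [invOf_eq_nonsing_inv] at hdet
  refine ((PosDef.fromBlocks₂₂ A B hD).mp h.posSemidef).posDef_iff_det_ne_zero.mpr ?_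
  exact right_ne_zero_of_mul (hdet ▸ h.det_pos.ne')

end Matrix

theorem logdet2_eq_add_of_det_eq_mul {ι κ μ : Type*} [Fintype ι] [DecidableEq ι] [Fintype κ]
    [DecidableEq κ] [Fintype μ] [DecidableEq μ] {M : Matrix ι ι ℂ} {N : Matrix κ κ ℂ}
    {K : Matrix μ μ ℂ} (hN : N.PosDef) (hK : K.PosDef) (h : M.det = N.det * K.det) :
    logdet2 M = logdet2 N + logdet2 K := by
  obtain ⟨hN_re, hN_im⟩ := Complex.pos_iff.mp hN.det_pos
  obtain ⟨hK_re, hK_im⟩ := Complex.pos_iff.mp hK.det_pos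
  rw [logdet2, logdet2, logdet2, h, Complex.mul_re, ← hN_im, zero_mul, sub_zero,
    Real.logb_mul hN_re.ne' hK_re.ne']

section blockSub

variable {NB : ℕ} {nb : Fin NB → ℕ}

theorem blockSub_conjTranspose (M : Matrix (Σ i, Fin (nb i)) (Σ i, Fin (nb i)) ℂ)
    (S T : Finset (Fin NB)) : (blockSub M S T)ᴴ = blockSub Mᴴ T S :=
  conjTranspose_submatrix M _ _

theorem Matrix.PosDef.blockSub {M : Matrix (Σ i, Fin (nb i)) (Σ i, Fin (nb i)) ℂ} (hM : M.PosDef)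
    (S : Finset (Fin NB)) : (blockSub M S S).PosDef :=
  hM.submatrix Subtype.val_injective

def insertBlockEquiv (S : Finset (Fin NB)) {i : Fin NB} (hi : i ∉ S) :
    {p : Σ j, Fin (nb j) // p.1 ∈ insert i S} ≃
      {p : Σ j, Fin (nb j) // p.1 ∈ ({i} : Finset (Fin NB))} ⊕ {p : Σ j, Fin (nb j) // p.1 ∈ S} :=
  (Equiv.subtypeEquivRight fun p => by rw [Finset.insert_eq, Finset.mem_union]).trans
    (subtypeOrEquiv _ _ fun _ hi' hS' p hp => hi (Finset.mem_singleton.mp (hi' p hp) ▸ hS' p hp))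

theorem blockSub_insert_submatrix_insertBlockEquiv
    (M : Matrix (Σ i, Fin (nb i)) (Σ i, Fin (nb i)) ℂ) (S : Finset (Fin NB)) {i : Fin NB}
    (hi : i ∉ S) :
    (blockSub M (insert i S) (insert i S)).submatrix (insertBlockEquiv S hi).symm
        (insertBlockEquiv S hi).symm =
      fromBlocks (blockSub M {i} {i}) (blockSub M {i} S) (blockSub M S {i}) (blockSub M S S) := by
  ext (p | p) (q | q) <;> rfl

theorem det_blockSub_insert (M : Matrix (Σ i, Fin (nb i)) (Σ i, Fin (nb i)) ℂ)
    (S : Finset (Fin NB)) {i : Fin NB} (hi : i ∉ S) (hM : IsUnit (blockSub M S S)) :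
    (blockSub M (insert i S) (insert i S)).det =
      (blockSub M S S).det *
        (blockSub M {i} {i} - blockSub M {i} S * (blockSub M S S)⁻¹ * blockSub M S {i}).det := by
  have := hM.invertible
  rw [← det_submatrix_equiv_self (insertBlockEquiv S hi).symm,
    blockSub_insert_submatrix_insertBlockEquiv, det_fromBlocks₂₂, invOf_eq_nonsing_inv]

end blockSub

theorem gFun_increment_general {NB nM : ℕ} {nb : Fin NB → ℕ}
    (A : Matrix (Σ i, Fin (nb i)) (Fin nM) ℂ)
    (Ω : Matrix (Σ i, Fin (nb i)) (Σ i, Fin (nb i)) ℂ) (hΩ : Ω.PosDef)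
    (S : Finset (Fin NB)) (i : Fin NB) (hi : i ∉ S) :
    (blockSub Ω {i} {i} -
        blockSub Ω {i} S * (blockSub Ω S S)⁻¹ * blockSub Ω S {i}).PosDef ∧
      gFun A Ω (insert i S) - gFun A Ω S =
        logdet2 (blockSub (A * Aᴴ) {i} {i} + blockSub Ω {i} {i}) -
          logdet2 (blockSub Ω {i} {i} -
            blockSub Ω {i} S * (blockSub Ω S S)⁻¹ * blockSub Ω S {i}) := by
  have hΩS : blockSub Ω S {i} = (blockSub Ω {i} S)ᴴ := by
    rw [blockSub_conjTranspose, hΩ.isHermitian.eq]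
  have hSchur : (blockSub Ω {i} {i} -
      blockSub Ω {i} S * (blockSub Ω S S)⁻¹ * blockSub Ω S {i}).PosDef := by
    have hblocks := (hΩ.blockSub (insert i S)).submatrix (insertBlockEquiv S hi).symm.injective
    rw [blockSub_insert_submatrix_insertBlockEquiv, hΩS] at hblocks
    rw [hΩS]
    exact hblocks.schur_complement₂₂
  refine ⟨hSchur, ?_⟩
  have hlogdet := logdet2_eq_add_of_det_eq_mul (hΩ.blockSub S) hSchur
    (det_blockSub_insert Ω S hi (hΩ.blockSub S).isUnit)
  rw [gFun, gFun, Finset.sum_insert hi, hlogdet]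
  ring

/-- Increment identity for `g`: adjoining a block `i ∉ S` increases `g_S` by
`log₂ det((AA†)_{i,i} + Ω_{i,i}) - log₂ det(Ω_{i,i} - Ω_{i,S} Ω_{S,S}⁻¹ Ω_{S,i})`,
and the Schur complement appearing is positive definite. -/
theorem gFun_increment {NB nM : ℕ} {nb : Fin NB → ℕ}
    (A : Matrix (Σ i, Fin (nb i)) (Fin nM) ℂ)
    (Ω : Matrix (Σ i, Fin (nb i)) (Σ i, Fin (nb i)) ℂ) (hΩ : Ω.PosDef)
    (S : Finset (Fin NB)) (hS : S.Nonempty) (i : Fin NB) (hi : i ∉ S) :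
    (blockSub Ω {i} {i} -
        blockSub Ω {i} S * (blockSub Ω S S)⁻¹ * blockSub Ω S {i}).PosDef ∧
      gFun A Ω (insert i S) - gFun A Ω S =
        logdet2 (blockSub (A * Aᴴ) {i} {i} + blockSub Ω {i} {i}) -
          logdet2 (blockSub Ω {i} {i} -
            blockSub Ω {i} S * (blockSub Ω S S)⁻¹ * blockSub Ω S {i}) :=
  gFun_increment_general A Ω hΩ S i hi
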